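/- Let W(k) be a sequence of stochastic matrices and suppose there is ε > 0 such that for every k there exists m > k with all entries of Φ(m,k) = W(m-1)⋯W(k) at least ε. Then every solution x(k) of the recurrent inequality x(k+1) ≤ W(k)·x(k) that is bounded from below converges to a consensus point c·𝟙 for some c ∈ ℝ. -/

import Mathlib

/-!
Let `M k` and `m k` be the largest and smallest coordinates of `x k`. Since each `W k` is
stochastic, `x (k+1) ≤ W k x k` gives `M (k+1) ≤ M k`, so `M` decreases to a limit `L` (it is
bounded below with `x`). For each `k` pick `m > k` with all entries of `Φ(m,k)` at least `ε`;
averaging with weight at least `ε` on the smallest coordinate yields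
`M m ≤ M k - ε (M k - m k)`, hence `M k - m k ≤ (M k - L) / ε → 0`, and every coordinate of
`x k` is squeezed to `L`.
-/

open Matrix Finset Filter Topology

def Stochastic {n : ℕ} (W : Matrix (Fin n) (Fin n) ℝ) : Prop :=
  (∀ i j, 0 ≤ W i j) ∧ ∀ i, ∑ j, W i j = 1

noncomputable def vmax {n : ℕ} (hn : 0 < n) (x : Fin n → ℝ) : ℝ :=
  Finset.univ.sup' ⟨⟨0, hn⟩, Finset.mem_univ _⟩ x

noncomputable def vmin {n : ℕ} (hn : 0 < n) (x : Fin n → ℝ) : ℝ :=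
  Finset.univ.inf' ⟨⟨0, hn⟩, Finset.mem_univ _⟩ x

def Phi {n : ℕ} (W : ℕ → Matrix (Fin n) (Fin n) ℝ) (k : ℕ) : ℕ → Matrix (Fin n) (Fin n) ℝ
  | 0 => 1
  | j + 1 => W (k + j) * Phi W k j

lemma Matrix.mulVec_mono {ι : Type*} [Fintype ι] {A : Matrix ι ι ℝ} (hA : ∀ i j, 0 ≤ A i j)
    {v w : ι → ℝ} (h : v ≤ w) : A *ᵥ v ≤ A *ᵥ w :=
  fun i => dotProduct_le_dotProduct_of_nonneg_left h (hA i)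

lemma Matrix.mulVec_apply_le_sub_of_mem_rowStochastic {ι : Type*} [Fintype ι] [DecidableEq ι]
    {A : Matrix ι ι ℝ} (hA : A ∈ rowStochastic ℝ ι) {v : ι → ℝ} {b ε : ℝ}
    (hv : ∀ j, v j ≤ b) {i j₀ : ι} (hε : ε ≤ A i j₀) :
    (A *ᵥ v) i ≤ b - ε * (b - v j₀) := by
  have hgap : A i j₀ * (b - v j₀) ≤ ∑ j, A i j * (b - v j) :=
    single_le_sum (f := fun j => A i j * (b - v j))
      (fun j _ => mul_nonneg (hA.1 i j) (sub_nonneg.2 (hv j))) (mem_univ j₀)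
  have hsum : ∑ j, A i j * (b - v j) = b - (A *ᵥ v) i := by
    simp only [mul_sub, sum_sub_distrib, ← sum_mul, sum_row_of_mem_rowStochastic hA i, one_mul]
    rfl
  nlinarith [sub_nonneg.2 (hv j₀)]

lemma Matrix.mulVec_apply_le_of_mem_rowStochastic {ι : Type*} [Fintype ι] [DecidableEq ι]
    {A : Matrix ι ι ℝ} (hA : A ∈ rowStochastic ℝ ι) {v : ι → ℝ} {b : ℝ}
    (hv : ∀ j, v j ≤ b) (i : ι) : (A *ᵥ v) i ≤ b := by
  simpa using mulVec_apply_le_sub_of_mem_rowStochastic hA hv (hA.1 i i)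

lemma le_vmax {n : ℕ} (hn : 0 < n) (v : Fin n → ℝ) (i : Fin n) : v i ≤ vmax hn v :=
  le_sup' v (mem_univ i)

lemma vmin_le {n : ℕ} (hn : 0 < n) (v : Fin n → ℝ) (i : Fin n) : vmin hn v ≤ v i :=
  inf'_le v (mem_univ i)

lemma vmax_le_iff {n : ℕ} (hn : 0 < n) {v : Fin n → ℝ} {b : ℝ} :
    vmax hn v ≤ b ↔ ∀ i, v i ≤ b :=
  ⟨fun h i => (le_vmax hn v i).trans h, fun h => sup'_le _ _ fun i _ => h i⟩

lemma exists_eq_vmin {n : ℕ} (hn : 0 < n) (v : Fin n → ℝ) : ∃ i, v i = vmin hn v := by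
  obtain ⟨i, -, hi⟩ := exists_mem_eq_inf' ⟨⟨0, hn⟩, mem_univ _⟩ v
  exact ⟨i, hi.symm⟩

section Subsolution

variable {n : ℕ} {W : ℕ → Matrix (Fin n) (Fin n) ℝ} (hW : ∀ k, W k ∈ rowStochastic ℝ (Fin n))
  {x : ℕ → Fin n → ℝ} (hx : ∀ k, x (k + 1) ≤ W k *ᵥ x k)
include hW

lemma Phi_mem_rowStochastic (k : ℕ) : ∀ j, Phi W k j ∈ rowStochastic ℝ (Fin n)
  | 0 => Submonoid.one_mem _
  | j + 1 => Submonoid.mul_mem _ (hW (k + j)) (Phi_mem_rowStochastic k j)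

include hx

lemma le_Phi_mulVec (k : ℕ) : ∀ j, x (k + j) ≤ Phi W k j *ᵥ x k
  | 0 => by simp [Phi]
  | j + 1 => calc
      x (k + j + 1) ≤ W (k + j) *ᵥ x (k + j) := hx (k + j)
      _ ≤ W (k + j) *ᵥ (Phi W k j *ᵥ x k) := mulVec_mono (hW (k + j)).1 (le_Phi_mulVec k j)
      _ = Phi W k (j + 1) *ᵥ x k := by rw [mulVec_mulVec, Phi]

lemma antitone_vmax (hn : 0 < n) : Antitone fun k => vmax hn (x k) :=
  antitone_nat_of_succ_le fun k => (vmax_le_iff hn).2 fun i =>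
    (hx k i).trans (mulVec_apply_le_of_mem_rowStochastic (hW k) (le_vmax hn _) i)

lemma vmax_le_sub_of_le_Phi (hn : 0 < n) {ε : ℝ} {k m : ℕ} (hkm : k ≤ m)
    (hΦ : ∀ i j, ε ≤ Phi W k (m - k) i j) :
    vmax hn (x m) ≤ vmax hn (x k) - ε * (vmax hn (x k) - vmin hn (x k)) := by
  obtain ⟨j₀, hj₀⟩ := exists_eq_vmin hn (x k)
  have hxm := le_Phi_mulVec hW hx k (m - k)
  rw [Nat.add_sub_cancel' hkm] at hxm
  refine (vmax_le_iff hn).2 fun i => (hxm i).trans ?_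
  simpa [hj₀] using mulVec_apply_le_sub_of_mem_rowStochastic
    (Phi_mem_rowStochastic hW k (m - k)) (le_vmax hn (x k)) (hΦ i j₀)

end Subsolution

theorem stmt12 {n : ℕ} (W : ℕ → Matrix (Fin n) (Fin n) ℝ)
    (hW : ∀ k, Stochastic (W k)) (ε : ℝ) (hε : 0 < ε)
    (hΦ : ∀ k, ∃ m > k, ∀ i j, ε ≤ Phi W k (m - k) i j)
    (x : ℕ → Fin n → ℝ) (hx : ∀ k, x (k + 1) ≤ (W k).mulVec (x k))
    (hbdd : ∃ c, ∀ k i, c ≤ x k i) :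
    ∃ c : ℝ, Tendsto (fun k => x k) atTop (𝓝 fun _ => c) := by
  rcases Nat.eq_zero_or_pos n with rfl | hn
  · exact ⟨0, tendsto_pi_nhds.2 fun i => i.elim0⟩
  have hW' k : W k ∈ rowStochastic ℝ (Fin n) := mem_rowStochastic_iff_sum.2 (hW k)
  obtain ⟨c, hc⟩ := hbdd
  set M := fun k => vmax hn (x k)
  have hMbdd : BddBelow (Set.range M) :=
    ⟨c, Set.forall_mem_range.2 fun k => (hc k ⟨0, hn⟩).trans (le_vmax hn _ _)⟩
  set L := ⨅ k, M k
  have hM : Tendsto M atTop (𝓝 L) := tendsto_atTop_ciInf (antitone_vmax hW' hx hn) hMbdd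
  have hlower k i : M k - (M k - L) / ε ≤ x k i := by
    obtain ⟨m, hkm, hεm⟩ := hΦ k
    have hcontract := vmax_le_sub_of_le_Phi hW' hx hn hkm.le hεm
    have hLm : L ≤ M m := ciInf_le hMbdd m
    have hmin := vmin_le hn (x k) i
    rw [sub_le_comm, le_div_iff₀ hε]
    nlinarith
  refine ⟨L, tendsto_pi_nhds.2 fun i => ?_⟩
  refine tendsto_of_tendsto_of_tendsto_of_le_of_le ?_ hM (fun k => hlower k i)
    (fun k => le_vmax hn (x k) i)
  simpa using hM.sub ((hM.sub_const L).div_const ε)
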